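/- arXiv:2112.14043 — 4 statements merged into one kernel-verified Lean document; each statement's English description precedes it below -/
import Mathlib

section
/- If A = (J - R)Q with J skew-symmetric and R, Q symmetric positive definite, then A is stable: every eigenvalue of A has strictly negative real part. -/
open Matrix

lemma quad_re {n : ℕ} (S : Matrix (Fin n) (Fin n) ℝ) (w : Fin n → ℂ) :
    (star w ⬝ᵥ (S.map (algebraMap ℝ ℂ)) *ᵥ w).re
      = (fun i => (w i).re) ⬝ᵥ S *ᵥ (fun i => (w i).re)
        + (fun i => (w i).im) ⬝ᵥ S *ᵥ (fun i => (w i).im) := by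
  simp only [dotProduct, mulVec, Pi.star_apply, Complex.re_sum,
    Finset.mul_sum, ← Finset.sum_add_distrib]
  refine Finset.sum_congr rfl fun i _ => Finset.sum_congr rfl fun j _ => ?_
  simp only [map_apply, algebraMap_apply, Algebra.algebraMap_self, RingHom.id_apply,
    Complex.coe_algebraMap, Complex.mul_re, Complex.mul_im, RCLike.star_def,
    Complex.conj_re, Complex.conj_im, Complex.ofReal_re, Complex.ofReal_im]
  ring

lemma quad_im {n : ℕ} (S : Matrix (Fin n) (Fin n) ℝ) (w : Fin n → ℂ) :
    (star w ⬝ᵥ (S.map (algebraMap ℝ ℂ)) *ᵥ w).im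
      = (fun i => (w i).re) ⬝ᵥ S *ᵥ (fun i => (w i).im)
        - (fun i => (w i).im) ⬝ᵥ S *ᵥ (fun i => (w i).re) := by
  simp only [dotProduct, mulVec, Pi.star_apply, Complex.im_sum,
    Finset.mul_sum, ← Finset.sum_sub_distrib]
  refine Finset.sum_congr rfl fun i _ => Finset.sum_congr rfl fun j _ => ?_
  simp only [map_apply, Complex.coe_algebraMap, Complex.mul_re, Complex.mul_im,
    RCLike.star_def, Complex.conj_re, Complex.conj_im, Complex.ofReal_re, Complex.ofReal_im]
  ring

lemma dot_symm {n : ℕ} (S : Matrix (Fin n) (Fin n) ℝ) (hS : Sᵀ = S) (a b : Fin n → ℝ) :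
    a ⬝ᵥ S *ᵥ b = b ⬝ᵥ S *ᵥ a := by
  calc a ⬝ᵥ S *ᵥ b = (a ᵥ* S) ⬝ᵥ b := (dotProduct_mulVec a S b)
    _ = (Sᵀ *ᵥ a) ⬝ᵥ b := by rw [mulVec_transpose]
    _ = b ⬝ᵥ Sᵀ *ᵥ a := dotProduct_comm _ _
    _ = b ⬝ᵥ S *ᵥ a := by rw [hS]

lemma skew_quad {n : ℕ} (J : Matrix (Fin n) (Fin n) ℝ) (hJ : Jᵀ = -J) (a : Fin n → ℝ) :
    a ⬝ᵥ J *ᵥ a = 0 := by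
  have h : a ⬝ᵥ J *ᵥ a = -(a ⬝ᵥ J *ᵥ a) := by
    calc a ⬝ᵥ J *ᵥ a = (a ᵥ* J) ⬝ᵥ a := (dotProduct_mulVec a J a)
      _ = (Jᵀ *ᵥ a) ⬝ᵥ a := by rw [mulVec_transpose]
      _ = ((-J) *ᵥ a) ⬝ᵥ a := by rw [hJ]
      _ = -((J *ᵥ a) ⬝ᵥ a) := by rw [neg_mulVec, neg_dotProduct]
      _ = -(a ⬝ᵥ J *ᵥ a) := by rw [dotProduct_comm]
  linarith

theorem stmt1 (n : ℕ) (J R Q : Matrix (Fin n) (Fin n) ℝ)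
    (hJ : Jᵀ = -J) (hR : R.PosDef) (hQ : Q.PosDef) :
    ∀ μ ∈ spectrum ℂ (((J - R) * Q).map (algebraMap ℝ ℂ)), μ.re < 0 := by
  intro μ hμ
  have hQsym : Qᵀ = Q := by
    have := hQ.1
    rwa [IsHermitian, conjTranspose_eq_transpose_of_trivial] at this
  set Jc := J.map (algebraMap ℝ ℂ) with hJc
  set Rc := R.map (algebraMap ℝ ℂ) with hRc
  set Qc := Q.map (algebraMap ℝ ℂ) with hQc
  have hmap : ((J - R) * Q).map (algebraMap ℝ ℂ) = (Jc - Rc) * Qc := by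
    rw [Matrix.map_mul, Matrix.map_sub _ (fun a b => map_sub (algebraMap ℝ ℂ) a b)]
  rw [hmap] at hμ
  rw [← AlgEquiv.spectrum_eq (Matrix.toLinAlgEquiv' (R := ℂ) (n := Fin n)),
    ← Module.End.hasEigenvalue_iff_mem_spectrum] at hμ
  obtain ⟨v, hv⟩ := hμ.exists_hasEigenvector
  have hv0 : v ≠ 0 := hv.right
  have hv' : ((Jc - Rc) * Qc) *ᵥ v = μ • v := by
    have heq := hv.apply_eq_smul
    rwa [Matrix.toLinAlgEquiv'_apply] at heq
  set w := Qc *ᵥ v with hw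
  set c := star v ⬝ᵥ Qc *ᵥ v with hc
  -- quadratic form with Q is a positive real
  have hQre : 0 < c.re := by
    rw [hc, quad_re]
    have key : (fun i => (v i).re) ≠ 0 ∨ (fun i => (v i).im) ≠ 0 := by
      by_contra hcon
      push_neg at hcon
      apply hv0
      funext i
      have h1 := congrFun hcon.1 i
      have h2 := congrFun hcon.2 i
      simp only [Pi.zero_apply] at h1 h2
      exact Complex.ext h1 h2
    have h1 : (0:ℝ) ≤ (fun i => (v i).re) ⬝ᵥ Q *ᵥ (fun i => (v i).re) := by
      rcases eq_or_ne (fun i => (v i).re) 0 with h | h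
      · simp [h]
      · have := hQ.dotProduct_mulVec_pos h; simp only [star_trivial] at this; linarith
    have h2 : (0:ℝ) ≤ (fun i => (v i).im) ⬝ᵥ Q *ᵥ (fun i => (v i).im) := by
      rcases eq_or_ne (fun i => (v i).im) 0 with h | h
      · simp [h]
      · have := hQ.dotProduct_mulVec_pos h; simp only [star_trivial] at this; linarith
    rcases key with h | h
    · have := hQ.dotProduct_mulVec_pos h; simp only [star_trivial] at this; linarith
    · have := hQ.dotProduct_mulVec_pos h; simp only [star_trivial] at this; linarith
  have hQim : c.im = 0 := by
    rw [hc, quad_im, dot_symm Q hQsym, sub_self]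
  have hw0 : w ≠ 0 := by
    intro h
    rw [hc, ← hw, h, dotProduct_zero] at hQre
    · simp at hQre
  -- Hermitian of Qc over ℂ
  have hQcH : Qcᴴ = Qc := by
    ext i j
    simp only [hQc, conjTranspose_apply, map_apply, Complex.coe_algebraMap, RCLike.star_def,
      Complex.conj_ofReal]
    exact congrArg _ (congrFun (congrFun hQsym i) j)
  have key : star w ⬝ᵥ Jc *ᵥ w - star w ⬝ᵥ Rc *ᵥ w = μ * c := by
    have h1 : star w ⬝ᵥ ((Jc - Rc) *ᵥ w) = star w ⬝ᵥ (μ • v) := by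
      rw [hw, mulVec_mulVec, hv']
    have h2 : star w ⬝ᵥ v = c := by
      rw [hw, star_mulVec, ← dotProduct_mulVec, hQcH, hc]
    rw [sub_mulVec, dotProduct_sub] at h1
    rw [h1, dotProduct_smul, smul_eq_mul, h2]
  have hJre : (star w ⬝ᵥ Jc *ᵥ w).re = 0 := by
    rw [hJc, quad_re, skew_quad J hJ, skew_quad J hJ, add_zero]
  have hRre : 0 < (star w ⬝ᵥ Rc *ᵥ w).re := by
    rw [hRc, quad_re]
    have key2 : (fun i => (w i).re) ≠ 0 ∨ (fun i => (w i).im) ≠ 0 := by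
      by_contra hcon
      push_neg at hcon
      apply hw0
      funext i
      have h1 := congrFun hcon.1 i
      have h2 := congrFun hcon.2 i
      simp only [Pi.zero_apply] at h1 h2
      exact Complex.ext h1 h2
    have h1 : (0:ℝ) ≤ (fun i => (w i).re) ⬝ᵥ R *ᵥ (fun i => (w i).re) := by
      rcases eq_or_ne (fun i => (w i).re) 0 with h | h
      · simp [h]
      · have := hR.dotProduct_mulVec_pos h; simp only [star_trivial] at this; linarith
    have h2 : (0:ℝ) ≤ (fun i => (w i).im) ⬝ᵥ R *ᵥ (fun i => (w i).im) := by
      rcases eq_or_ne (fun i => (w i).im) 0 with h | h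
      · simp [h]
      · have := hR.dotProduct_mulVec_pos h; simp only [star_trivial] at this; linarith
    rcases key2 with h | h
    · have := hR.dotProduct_mulVec_pos h; simp only [star_trivial] at this; linarith
    · have := hR.dotProduct_mulVec_pos h; simp only [star_trivial] at this; linarith
  have hre := congrArg Complex.re key
  rw [Complex.sub_re, Complex.mul_re, hQim, hJre, mul_zero, sub_zero, zero_sub] at hre
  nlinarith
end

section
/- For any symmetric positive definite P ∈ ℝ^{n×n} and any symmetric ξ ∈ ℝ^{n×n}, the matrix P + ξ + (1/2)ξP⁻¹ξ is symmetric positive definite. -/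
open Matrix

lemma posDef_smul_aux {n : ℕ} {M : Matrix (Fin n) (Fin n) ℝ} {c : ℝ}
    (hc : 0 < c) (hM : M.PosDef) : (c • M).PosDef := by
  refine ⟨?_, fun x hx => ?_⟩
  · show (c • M)ᴴ = c • M
    rw [conjTranspose_smul, hM.1.eq]; simp
  · convert mul_pos hc (hM.2 hx) using 1
    simp only [Finsupp.mul_sum, Matrix.smul_apply, smul_eq_mul]
    exact Finsupp.sum_congr fun i _ => Finsupp.sum_congr fun j _ => by ring

lemma posSemidef_smul_aux {n : ℕ} {M : Matrix (Fin n) (Fin n) ℝ} {c : ℝ}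
    (hc : 0 ≤ c) (hM : M.PosSemidef) : (c • M).PosSemidef := by
  refine ⟨?_, fun x => ?_⟩
  · show (c • M)ᴴ = c • M
    rw [conjTranspose_smul, hM.1.eq]; simp
  · convert mul_nonneg hc (hM.2 x) using 1
    simp only [Finsupp.mul_sum, Matrix.smul_apply, smul_eq_mul]
    exact Finsupp.sum_congr fun i _ => Finsupp.sum_congr fun j _ => by ring

theorem stmt5 (n : ℕ) (P ξ : Matrix (Fin n) (Fin n) ℝ)
    (hP : P.PosDef) (hξ : ξᵀ = ξ) :
    (P + ξ + (2⁻¹ : ℝ) • (ξ * P⁻¹ * ξ)).PosDef := by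
  have hPinv : (P⁻¹).PosDef := hP.inv
  have hdet : IsUnit P.det := isUnit_iff_ne_zero.mpr hP.det_pos.ne'
  have h1 : P * P⁻¹ = 1 := mul_nonsing_inv P hdet
  have h2 : P⁻¹ * P = 1 := nonsing_inv_mul P hdet
  have hH : (P + ξ)ᴴ = P + ξ := by
    have hPH : Pᴴ = P := hP.isHermitian.eq
    rw [conjTranspose_add, hPH, show ξᴴ = ξ from hξ]
  have expand : (P + ξ) * P⁻¹ * (P + ξ) = P + ξ + ξ + ξ * P⁻¹ * ξ := by
    rw [add_mul, h1, add_mul, one_mul, mul_add, Matrix.mul_assoc ξ P⁻¹ P, h2,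
      Matrix.mul_one, ← add_assoc]
  have key : P + ξ + (2⁻¹ : ℝ) • (ξ * P⁻¹ * ξ)
      = (2⁻¹ : ℝ) • P + (2⁻¹ : ℝ) • ((P + ξ) * P⁻¹ * (P + ξ)ᴴ) := by
    rw [hH, expand]
    ext i j
    simp [Matrix.add_apply, Matrix.smul_apply]
    ring
  rw [key]
  exact (posDef_smul_aux (by norm_num) hP).add_posSemidef
    (posSemidef_smul_aux (by norm_num)
      (hPinv.posSemidef.mul_mul_conjTranspose_same (P + ξ)))
end

section
/- Suppose λ, φ, d, s, ρ, ν ∈ ℝ satisfy λ ≥ 0, s ≤ 0, φ + d + s ≤ 0, λ(φ + d + s) = 0, λs = νs, ν ≥ ρ ≥ λ ≥ 0, and φ ≥ 0. Then λ(φ + s) + ρd ≤ 0. -/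
theorem stmt15 (lam φ d s ρ ν : ℝ)
    (h1 : 0 ≤ lam) (h2 : s ≤ 0) (h3 : φ + d + s ≤ 0)
    (h4 : lam * (φ + d + s) = 0) (h5 : lam * s = ν * s)
    (h6 : ρ ≤ ν) (h7 : lam ≤ ρ) (h8 : 0 ≤ φ) :
    lam * (φ + s) + ρ * d ≤ 0 := by
  rcases eq_or_lt_of_le h2 with hs | hs
  · nlinarith [mul_nonneg (sub_nonneg.2 h7) (neg_nonneg.2 h3)]
  · have hlv : lam = ν := mul_right_cancel₀ (ne_of_lt hs) h5
    have hlr : lam = ρ := le_antisymm h7 (by linarith)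
    nlinarith [h4]
end

section
/- Suppose μ, φ, t⁺, t⁻, ρ, ν ∈ ℝ satisfy φ > 0, t⁺ ≤ 0, t⁻ ≤ 0, μ(t⁺ - t⁻) = ν(t⁺ + t⁻), ν ≥ ρ ≥ |μ|, ρ ≥ 0. Then (μ - ρ)(φ + t⁺ - t⁻) ≤ 0. -/
theorem stmt17 (μ φ tp tm ρ ν : ℝ)
    (h0 : 0 < φ) (h1 : tp ≤ 0) (h2 : tm ≤ 0)
    (h3 : μ * (tp - tm) = ν * (tp + tm))
    (h4 : ρ ≤ ν) (h5 : |μ| ≤ ρ) (h6 : 0 ≤ ρ) :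
    (μ - ρ) * (φ + tp - tm) ≤ 0 := by
  have hμρ : μ ≤ ρ := le_trans (le_abs_self μ) h5
  have habs := abs_le.1 (le_trans h5 h4)
  by_cases hν : ν = 0
  · have hρ : ρ = 0 := le_antisymm (hν ▸ h4) h6
    have hμ : μ = 0 := by
      have := abs_nonneg μ
      have : |μ| = 0 := le_antisymm (hρ ▸ h5) this
      exact abs_eq_zero.1 this
    simp [hμ, hρ]
  · have hνpos : 0 < ν := lt_of_le_of_ne (le_trans h6 h4) (Ne.symm hν)
    have htt : tp * tm = 0 := by
      have h1' : 0 ≤ tp * tm := by nlinarith [mul_nonneg (neg_nonneg.2 h1) (neg_nonneg.2 h2)]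
      have hμ2 : μ ^ 2 ≤ ν ^ 2 := by nlinarith [habs.1, habs.2]
      have hsq : (μ * (tp - tm)) ^ 2 = (ν * (tp + tm)) ^ 2 := by rw [h3]
      have h2' : tp * tm ≤ 0 := by
        nlinarith [hsq, mul_le_mul_of_nonneg_right hμ2 (sq_nonneg (tp - tm)),
          mul_pos hνpos hνpos]
      linarith
    rcases mul_eq_zero.1 htt with htp | htm
    · have : (0:ℝ) ≤ (ρ - μ) * (φ + tp - tm) :=
        mul_nonneg (by linarith) (by rw [htp]; linarith)
      nlinarith
    · rw [htm] at h3
      have hcase : (ν - μ) * tp = 0 := by ring_nf; nlinarith [h3]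
      rcases mul_eq_zero.1 hcase with hνμ | htp
      · have hμν : μ = ν := by linarith [sub_eq_zero.1 hνμ]
        have hμρ2 : μ = ρ := le_antisymm hμρ (by linarith)
        simp [hμρ2]
      · have : (0:ℝ) ≤ (ρ - μ) * (φ + tp - tm) :=
          mul_nonneg (by linarith) (by rw [htp, htm]; linarith)
        nlinarith
end
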